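/- arXiv:2601.21368 — 2 statements merged into one kernel-verified Lean document; each statement's English description precedes it below -/
import Mathlib

section
/- For every odd natural number k with k ≥ 1, there exists a real number a with 0 < a < 1 such that the set of zeros of F_k in the closed interval [-1,1] is exactly {-a, a}. -/
open Polynomial Set intervalIntegral

private lemma poly_ftc (p : Polynomial ℝ) (a b : ℝ) :
    ∫ x in a..b, (Polynomial.derivative p).eval x = p.eval b - p.eval a :=
  intervalIntegral.integral_deriv_eq_sub' (fun x => p.eval x)
    (funext fun x => Polynomial.deriv (p := p))
    (fun x _ => p.differentiableAt)
    ((p.derivative.continuous).continuousOn)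

private lemma parityF (F : ℕ → Polynomial ℝ)
    (hF0 : F 0 = Polynomial.X)
    (hFd : ∀ k : ℕ, Polynomial.derivative (F (k + 1)) = F k)
    (hFi : ∀ k : ℕ, ∫ x in (-1 : ℝ)..1, (F (k + 1)).eval x = 0) :
    ∀ k x, (F k).eval (-x) = (-1 : ℝ) ^ (k + 1) * (F k).eval x := by
  intro k
  induction k with
  | zero => intro x; simp [hF0]
  | succ k ih =>
    set c : ℝ := (-1 : ℝ) ^ (k + 1 + 1) with hc
    set G : ℝ → ℝ := fun x => (F (k + 1)).eval (-x) - c * (F (k + 1)).eval x with hG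
    have hd : ∀ y : ℝ, HasDerivAt G 0 y := by
      intro y
      have h1 : HasDerivAt (fun x : ℝ => (F (k + 1)).eval (-x))
          ((Polynomial.derivative (F (k + 1))).eval (-y) * (-1)) y :=
        ((F (k + 1)).hasDerivAt (-y)).comp y (hasDerivAt_neg y)
      rw [hFd] at h1
      have h2 : HasDerivAt (fun x : ℝ => c * (F (k + 1)).eval x)
          (c * (Polynomial.derivative (F (k + 1))).eval y) y :=
        ((F (k + 1)).hasDerivAt y).const_mul c
      rw [hFd] at h2
      have h3 := h1.sub h2
      convert h3 using 1
      · rfl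
      · rfl
      · rfl
      rw [ih y, hc, pow_succ]
      ring
    have hdiff : Differentiable ℝ G := fun y => (hd y).differentiableAt
    have hzero : ∀ y, deriv G y = 0 := fun y => (hd y).deriv
    have hconst : ∀ y, G y = G 1 := fun y => is_const_of_deriv_eq_zero hdiff hzero y 1
    have hi1 : (∫ x in (-1 : ℝ)..1, (F (k + 1)).eval (-x)) = 0 := by
      have h := intervalIntegral.integral_comp_neg (a := (-1 : ℝ)) (b := 1)
        (f := fun x => (F (k + 1)).eval x)
      simp only [neg_neg] at h
      rw [h]
      exact hFi k
    have hi2 : (∫ x in (-1 : ℝ)..1, c * (F (k + 1)).eval x) = 0 := by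
      rw [intervalIntegral.integral_const_mul, hFi k, mul_zero]
    have int1 : IntervalIntegrable (fun x : ℝ => (F (k + 1)).eval (-x))
        MeasureTheory.volume (-1) 1 :=
      ((F (k + 1)).continuous.comp continuous_neg).intervalIntegrable _ _
    have int2 : IntervalIntegrable (fun x : ℝ => c * (F (k + 1)).eval x)
        MeasureTheory.volume (-1) 1 :=
      (continuous_const.mul (F (k + 1)).continuous).intervalIntegrable _ _
    have hint : (∫ x in (-1 : ℝ)..1, G x) = 0 := by
      simp only [hG]
      rw [intervalIntegral.integral_sub int1 int2, hi1, hi2, sub_zero]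
    have h2 : (2 : ℝ) * G 1 = 0 := by
      have hcongr : (∫ x in (-1 : ℝ)..1, G x) = ∫ _x in (-1 : ℝ)..1, G 1 :=
        intervalIntegral.integral_congr (fun y _ => hconst y)
      rw [intervalIntegral.integral_const, hint] at hcongr
      simp at hcongr
      linarith
    have hG0 : ∀ y, G y = 0 := fun y => by rw [hconst y]; linarith
    intro x
    have hx := hG0 x
    rw [hG] at hx
    simp only at hx
    linarith

private lemma eval_one_even (F : ℕ → Polynomial ℝ)
    (hF0 : F 0 = Polynomial.X)
    (hFd : ∀ k : ℕ, Polynomial.derivative (F (k + 1)) = F k)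
    (hFi : ∀ k : ℕ, ∫ x in (-1 : ℝ)..1, (F (k + 1)).eval x = 0) (n : ℕ) :
    (F (2 * n + 1 + 1)).eval 1 = 0 := by
  have hftc := poly_ftc (F (2 * n + 1 + 1)) (-1) 1
  rw [hFd (2 * n + 1), hFi (2 * n)] at hftc
  have hodd := parityF F hF0 hFd hFi (2 * n + 1 + 1) 1
  rw [Odd.neg_one_pow ⟨n + 1, by ring⟩] at hodd
  linarith

private lemma half_int (F : ℕ → Polynomial ℝ)
    (hF0 : F 0 = Polynomial.X)
    (hFd : ∀ k : ℕ, Polynomial.derivative (F (k + 1)) = F k)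
    (hFi : ∀ k : ℕ, ∫ x in (-1 : ℝ)..1, (F (k + 1)).eval x = 0) (n : ℕ) :
    (∫ x in (0 : ℝ)..1, (F (2 * n + 1)).eval x) = 0 := by
  have heven : ∀ x, (F (2 * n + 1)).eval (-x) = (F (2 * n + 1)).eval x := by
    intro x
    rw [parityF F hF0 hFd hFi (2 * n + 1) x, Even.neg_one_pow ⟨n + 1, by ring⟩, one_mul]
  have hsplit : (∫ x in (-1 : ℝ)..0, (F (2 * n + 1)).eval x)
      + (∫ x in (0 : ℝ)..1, (F (2 * n + 1)).eval x) = 0 := by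
    rw [intervalIntegral.integral_add_adjacent_intervals
      ((F (2 * n + 1)).continuous.intervalIntegrable _ _)
      ((F (2 * n + 1)).continuous.intervalIntegrable _ _)]
    exact hFi (2 * n)
  have hneg : (∫ x in (-1 : ℝ)..0, (F (2 * n + 1)).eval x)
      = ∫ x in (0 : ℝ)..1, (F (2 * n + 1)).eval x := by
    have h := intervalIntegral.integral_comp_neg (a := (0 : ℝ)) (b := 1)
      (f := fun x => (F (2 * n + 1)).eval x)
    simp only [heven, neg_zero] at h
    rw [← h]
  linarith

private lemma stepUT (F : ℕ → Polynomial ℝ)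
    (hF0 : F 0 = Polynomial.X)
    (hFd : ∀ k : ℕ, Polynomial.derivative (F (k + 1)) = F k)
    (hFi : ∀ k : ℕ, ∫ x in (-1 : ℝ)..1, (F (k + 1)).eval x = 0)
    (n : ℕ) (ε : ℝ) (hε : ε = 1 ∨ ε = -1)
    (hpos : ∀ x ∈ Ioo (0 : ℝ) 1, 0 < ε * (F (2 * n)).eval x) :
    ∃ a : ℝ, 0 < a ∧ a < 1 ∧
      StrictMonoOn (fun x => ε * (F (2 * n + 1)).eval x) (Icc (0 : ℝ) 1) ∧
      (F (2 * n + 1)).eval a = 0 := by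
  set g : ℝ → ℝ := fun x => ε * (F (2 * n + 1)).eval x with hg
  have hder : ∀ y : ℝ, HasDerivAt g (ε * (F (2 * n)).eval y) y := by
    intro y
    have h := ((F (2 * n + 1)).hasDerivAt y).const_mul ε
    rwa [hFd (2 * n)] at h
  have hcont : Continuous g := continuous_const.mul (F (2 * n + 1)).continuous
  have hmono : StrictMonoOn g (Icc (0 : ℝ) 1) := by
    apply strictMonoOn_of_deriv_pos (convex_Icc 0 1) hcont.continuousOn
    intro x hx
    rw [interior_Icc] at hx
    rw [(hder x).deriv]
    exact hpos x hx
  have hint : (∫ x in (0 : ℝ)..1, g x) = 0 := by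
    rw [hg]
    rw [intervalIntegral.integral_const_mul, half_int F hF0 hFd hFi n, mul_zero]
  have hWint : IntervalIntegrable g MeasureTheory.volume 0 1 := hcont.intervalIntegrable 0 1
  have hg0 : g 0 < 0 := by
    by_contra h
    push_neg at h
    have hI : 0 < ∫ x in (0 : ℝ)..1, g x := by
      apply intervalIntegral.intervalIntegral_pos_of_pos_on hWint _ one_pos
      intro x hx
      have h2 := hmono (left_mem_Icc.mpr one_pos.le) ⟨hx.1.le, hx.2.le⟩ hx.1
      try dsimp only at h2 ⊢
      linarith
    linarith
  have hg1 : 0 < g 1 := by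
    by_contra h
    push_neg at h
    have hI : 0 < ∫ x in (0 : ℝ)..1, -g x := by
      refine intervalIntegral.intervalIntegral_pos_of_pos_on ?_ ?_ one_pos
      · exact hWint.neg
      · intro x hx
        have h2 := hmono ⟨hx.1.le, hx.2.le⟩ (right_mem_Icc.mpr one_pos.le) hx.2
        simp only [neg_pos]
        linarith
    rw [intervalIntegral.integral_neg, hint] at hI
    linarith
  have hIVT := intermediate_value_Ioo (le_of_lt one_pos : (0 : ℝ) ≤ 1) hcont.continuousOn
  obtain ⟨a, haIoo, hga⟩ := hIVT ⟨hg0, hg1⟩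
  refine ⟨a, haIoo.1, haIoo.2, hmono, ?_⟩
  have hεne : ε ≠ 0 := by rcases hε with h | h <;> simp [h]
  rw [hg] at hga
  simp only at hga
  exact (mul_eq_zero.mp hga).resolve_left hεne

private lemma stepTU (F : ℕ → Polynomial ℝ)
    (hF0 : F 0 = Polynomial.X)
    (hFd : ∀ k : ℕ, Polynomial.derivative (F (k + 1)) = F k)
    (hFi : ∀ k : ℕ, ∫ x in (-1 : ℝ)..1, (F (k + 1)).eval x = 0)
    (n : ℕ) (a ε : ℝ) (hε : ε = 1 ∨ ε = -1)
    (ha0 : 0 < a) (ha1 : a < 1)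
    (hmono : StrictMonoOn (fun x => ε * (F (2 * n + 1)).eval x) (Icc (0 : ℝ) 1))
    (hroot : (F (2 * n + 1)).eval a = 0) :
    ∀ x ∈ Ioo (0 : ℝ) 1, 0 < (-ε) * (F (2 * n + 1 + 1)).eval x := by
  set φ : ℝ → ℝ := fun x => ε * (F (2 * n + 1 + 1)).eval x with hφ
  have hφ0 : φ 0 = 0 := by
    have h := parityF F hF0 hFd hFi (2 * n + 1 + 1) 0
    rw [neg_zero, Odd.neg_one_pow ⟨n + 1, by ring⟩] at h
    have h2 : (F (2 * n + 1 + 1)).eval 0 = 0 := by linarith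
    simp [hφ, h2]
  have hφ1 : φ 1 = 0 := by
    have h1 := eval_one_even F hF0 hFd hFi n
    simp [hφ, h1]
  have hcont : Continuous φ := continuous_const.mul (F _).continuous
  have hder : ∀ y : ℝ, HasDerivAt φ (ε * (F (2 * n + 1)).eval y) y := by
    intro y
    have h := ((F (2 * n + 1 + 1)).hasDerivAt y).const_mul ε
    rwa [hFd (2 * n + 1)] at h
  have hga : ε * (F (2 * n + 1)).eval a = 0 := by rw [hroot, mul_zero]
  have hanti : StrictAntiOn φ (Icc (0 : ℝ) a) := by
    apply strictAntiOn_of_deriv_neg (convex_Icc 0 a) hcont.continuousOn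
    intro x hx
    rw [interior_Icc] at hx
    rw [(hder x).deriv]
    have h2 := hmono ⟨hx.1.le, (hx.2.trans ha1).le⟩ ⟨ha0.le, ha1.le⟩ hx.2
    try dsimp only at h2
    linarith
  have hmono2 : StrictMonoOn φ (Icc a 1) := by
    apply strictMonoOn_of_deriv_pos (convex_Icc a 1) hcont.continuousOn
    intro x hx
    rw [interior_Icc] at hx
    rw [(hder x).deriv]
    have h2 := hmono ⟨ha0.le, ha1.le⟩ ⟨(ha0.trans hx.1).le, hx.2.le⟩ hx.1
    try dsimp only at h2
    linarith
  intro x hx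
  have hφx : φ x < 0 := by
    rcases le_or_gt x a with h | h
    · have h2 := hanti (left_mem_Icc.mpr ha0.le) ⟨hx.1.le, h⟩ hx.1
      calc φ x < φ 0 := h2
        _ = 0 := hφ0
    · have h2 := hmono2 ⟨h.le, hx.2.le⟩ (right_mem_Icc.mpr ha1.le) hx.2
      calc φ x < φ 1 := h2
        _ = 0 := hφ1
  have hφeq : ε * (F (2 * n + 1 + 1)).eval x < 0 := hφx
  have hrw : (-ε) * (F (2 * n + 1 + 1)).eval x = -(ε * (F (2 * n + 1 + 1)).eval x) := by ring
  rw [hrw]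
  linarith

/-- Let `F 0 = X` and, inductively, `F (k+1)` be the unique polynomial
with derivative `F k` and mean zero on `[-1,1]`.  For every odd `k ≥ 1`, there is a real
`a` with `0 < a < 1` such that the set of zeros of `F k` in `[-1,1]` is exactly `{-a, a}`. -/
theorem stmt2 (F : ℕ → Polynomial ℝ)
    (hF0 : F 0 = Polynomial.X)
    (hFd : ∀ k : ℕ, Polynomial.derivative (F (k + 1)) = F k)
    (hFi : ∀ k : ℕ, ∫ x in (-1 : ℝ)..1, (F (k + 1)).eval x = 0)
    (k : ℕ) (hk : Odd k) (hk1 : 1 ≤ k) :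
    ∃ a : ℝ, 0 < a ∧ a < 1 ∧
      {x : ℝ | x ∈ Set.Icc (-1 : ℝ) 1 ∧ (F k).eval x = 0} = {-a, a} := by
  obtain ⟨n, hn⟩ := hk
  have hk2 : k = 2 * n + 1 := by omega
  subst hk2
  have U : ∀ m : ℕ, ∃ ε : ℝ, (ε = 1 ∨ ε = -1) ∧
      ∀ x ∈ Ioo (0 : ℝ) 1, 0 < ε * (F (2 * m)).eval x := by
    intro m
    induction m with
    | zero =>
      refine ⟨1, Or.inl rfl, ?_⟩
      intro x hx
      have hF : F (2 * 0) = Polynomial.X := hF0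
      rw [hF]
      simpa using hx.1
    | succ m ih =>
      obtain ⟨ε, hε, hpos⟩ := ih
      obtain ⟨a, ha0, ha1, hmono, hroot⟩ := stepUT F hF0 hFd hFi m ε hε hpos
      refine ⟨-ε, ?_, ?_⟩
      · rcases hε with h | h <;> simp [h]
      · have h2 : 2 * (m + 1) = 2 * m + 1 + 1 := by ring
        rw [h2]
        exact stepTU F hF0 hFd hFi m a ε hε ha0 ha1 hmono hroot
  obtain ⟨ε, hε, hpos⟩ := U n
  obtain ⟨a, ha0, ha1, hmono, hroot⟩ := stepUT F hF0 hFd hFi n ε hε hpos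
  refine ⟨a, ha0, ha1, ?_⟩
  have hεne : ε ≠ 0 := by rcases hε with h | h <;> simp [h]
  have heven : ∀ x, (F (2 * n + 1)).eval (-x) = (F (2 * n + 1)).eval x := fun x => by
    rw [parityF F hF0 hFd hFi (2 * n + 1) x, Even.neg_one_pow ⟨n + 1, by ring⟩, one_mul]
  ext x
  simp only [Set.mem_setOf_eq, Set.mem_insert_iff, Set.mem_singleton_iff, Set.mem_Icc]
  constructor
  · rintro ⟨⟨hx1, hx2⟩, hx0⟩
    rcases le_or_gt 0 x with h | h
    · right
      have h1 : ε * (F (2 * n + 1)).eval x = ε * (F (2 * n + 1)).eval a := by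
        rw [hx0, hroot]
      exact hmono.injOn ⟨h, hx2⟩ ⟨ha0.le, ha1.le⟩ h1
    · left
      have hnx : (F (2 * n + 1)).eval (-x) = 0 := by rw [heven, hx0]
      have h1 : ε * (F (2 * n + 1)).eval (-x) = ε * (F (2 * n + 1)).eval a := by
        rw [hnx, hroot]
      have h2 := hmono.injOn ⟨by linarith, by linarith⟩ ⟨ha0.le, ha1.le⟩ h1
      linarith
  · rintro (rfl | rfl)
    · refine ⟨⟨by linarith, by linarith⟩, ?_⟩
      rw [heven a]
      exact hroot
    · exact ⟨⟨by linarith, ha1.le⟩, hroot⟩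
end

section
/- For every natural number k ≥ 1 and every real x ∈ [-1,1], one has |F_k(x)| ≤ 2 · π^{-(k+1)} · ∑_{n=1}^∞ 1/n^{k+1}. -/
open Complex MeasureTheory Set intervalIntegral Real
open scoped Nat

private lemma bern1 (x : ℝ) : bernoulliFun 1 x = x - 1/2 := by
  simp [bernoulliFun, Polynomial.bernoulli, Finset.sum_range_succ]
  ring

private lemma bern_deriv (m : ℕ) (x : ℝ) :
    HasDerivAt (fun y : ℝ => bernoulliFun m ((y + 1) / 2))
      ((m : ℝ) * bernoulliFun (m - 1) ((x + 1) / 2) * (1/2)) x := by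
  have h1 : HasDerivAt (fun y : ℝ => (y + 1) / 2) (1/2) x := by
    simpa using (((hasDerivAt_id x).add_const 1).div_const 2)
  exact (hasDerivAt_bernoulliFun m ((x + 1) / 2)).comp x h1

private lemma bern_cont (m : ℕ) : Continuous (fun y : ℝ => bernoulliFun m ((y + 1) / 2)) :=
  (Polynomial.continuous _).comp (by continuity)

private lemma bern_int (m : ℕ) (hm : m ≠ 0) :
    ∫ x in (-1 : ℝ)..1, bernoulliFun m ((x + 1) / 2) = 0 := by
  have h : ∀ x : ℝ, (x + 1) / 2 = (1/2) * x + 1/2 := fun x => by ring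
  simp_rw [h]
  rw [intervalIntegral.integral_comp_mul_add (bernoulliFun m) (by norm_num : (1/2:ℝ) ≠ 0) (1/2)]
  norm_num [integral_bernoulliFun_eq_zero hm]

/-- The key identity: `F k = (2^(k+1)/(k+1)!) * B_{k+1}((x+1)/2)`. -/
private lemma F_eq (F : ℕ → Polynomial ℝ)
    (hF0 : F 0 = Polynomial.X)
    (hFd : ∀ k : ℕ, Polynomial.derivative (F (k + 1)) = F k)
    (hFi : ∀ k : ℕ, ∫ x in (-1 : ℝ)..1, (F (k + 1)).eval x = 0)
    (k : ℕ) (x : ℝ) :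
    (F k).eval x = 2 ^ (k+1) / (k+1)! * bernoulliFun (k+1) ((x + 1) / 2) := by
  induction k generalizing x with
  | zero =>
    rw [hF0, bern1]
    simp
    ring
  | succ k ih =>
    set c : ℕ → ℝ := fun k => 2 ^ (k+1) / (k+1)! with hc
    set g : ℕ → ℝ → ℝ := fun k x => c k * bernoulliFun (k+1) ((x + 1) / 2) with hg
    have hgd : ∀ y : ℝ, HasDerivAt (g (k+1)) (g k y) y := by
      intro y
      have := ((bern_deriv (k+2) y).const_mul (c (k+1)))
      convert this using 1
      show c k * bernoulliFun (k+1) ((y+1)/2) =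
        c (k+1) * ((k+2 : ℕ) * bernoulliFun (k+2-1) ((y+1)/2) * (1/2))
      have : (k+2) - 1 = k+1 := rfl
      rw [this]
      have hfac : ((k+2)! : ℝ) = (k+2) * (k+1)! := by
        rw [Nat.factorial_succ]; push_cast; ring
      have h1 : ((k+1)! : ℝ) ≠ 0 := by positivity
      have h2 : ((k+2)! : ℝ) ≠ 0 := by positivity
      simp only [hc]
      field_simp
      push_cast [hfac]
      ring
      all_goals rfl
    have hφd : ∀ y : ℝ, HasDerivAt (fun z => (F (k+1)).eval z - g (k+1) z) 0 y := by
      intro y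
      have h1 : HasDerivAt (fun z => (F (k+1)).eval z) (g k y) y := by
        have := (F (k+1)).hasDerivAt y
        rwa [hFd k, ih y] at this
      have h2 := h1.sub (hgd y)
      rw [sub_self] at h2
      exact h2
    have hconst : ∀ y : ℝ, (F (k+1)).eval y - g (k+1) y = (F (k+1)).eval (-1) - g (k+1) (-1) := by
      intro y
      exact is_const_of_deriv_eq_zero (fun z => (hφd z).differentiableAt)
        (fun z => (hφd z).deriv) y (-1)
    have hint : ∫ y in (-1:ℝ)..1, ((F (k+1)).eval y - g (k+1) y) = 0 := by
      rw [intervalIntegral.integral_sub (g := g (k+1)) ((Polynomial.continuous _).intervalIntegrable _ _)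
        ((continuous_const.mul (bern_cont (k+2)) : Continuous (g (k+1))).intervalIntegrable _ _)]
      rw [hFi k]
      have : ∫ y in (-1:ℝ)..1, g (k+1) y = c (k+1) * ∫ y in (-1:ℝ)..1, bernoulliFun (k+2) ((y+1)/2) := by
        rw [← intervalIntegral.integral_const_mul]
      rw [this, bern_int (k+2) (by omega)]
      ring
    have hzero : (F (k+1)).eval (-1) - g (k+1) (-1) = 0 := by
      have : ∫ y in (-1:ℝ)..1, ((F (k+1)).eval y - g (k+1) y)
          = ∫ y in (-1:ℝ)..1, ((F (k+1)).eval (-1) - g (k+1) (-1)) := by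
        apply intervalIntegral.integral_congr
        intro y _
        exact hconst y
      rw [hint] at this
      simp at this
      have hg1 : g (k+1) (-1) = c (k+1) * bernoulliFun (k+1+1) (((-1:ℝ)+1)/2) := rfl
      norm_num at hg1
      linarith
    have := hconst x
    rw [hzero] at this
    have hgx : g (k+1) x = 2 ^ (k+1+1) / ((k+1+1)! : ℝ) * bernoulliFun (k+1+1) ((x+1)/2) := rfl
    linarith

/-- Fourier bound for Bernoulli polynomials on `[0,1]`. -/
private lemma bern_bound {m : ℕ} (hm : 2 ≤ m) {t : ℝ} (ht : t ∈ Set.Icc (0:ℝ) 1) :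
    |bernoulliFun m t| ≤ 2 * (m ! : ℝ) / (2 * π) ^ m * ∑' n : ℕ, (1:ℝ) / ((n:ℝ)+1) ^ m := by
  have h := hasSum_one_div_nat_pow_mul_fourier hm ht
  set f : ℕ → ℂ := fun n =>
    (1 : ℂ) / (n : ℂ) ^ m * (fourier n (t : UnitAddCircle) + (-1 : ℂ) ^ m * fourier (-n) (t : UnitAddCircle)) with hf
  have hb : ∀ n : ℕ, ‖f n‖ ≤ 2 * ((1:ℝ) / (n:ℝ) ^ m) := by
    intro n
    rw [hf]
    simp only [norm_mul]
    have h1 : ‖(1 : ℂ) / (n : ℂ) ^ m‖ = (1:ℝ) / (n:ℝ) ^ m := by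
      rw [norm_div, norm_one, norm_pow, Complex.norm_natCast]
    have h2 : ‖fourier (n:ℤ) (t : UnitAddCircle) + (-1 : ℂ) ^ m * fourier (-n) (t : UnitAddCircle)‖ ≤ 2 := by
      refine le_trans (norm_add_le _ _) ?_
      have e1 : ‖fourier (n:ℤ) (t : UnitAddCircle)‖ = 1 := Circle.norm_coe _
      have e2 : ‖fourier (-(n:ℤ)) (t : UnitAddCircle)‖ = 1 := Circle.norm_coe _
      rw [norm_mul, e1, e2]
      simp
      norm_num
    calc ‖(1 : ℂ) / (n : ℂ) ^ m‖ * ‖fourier (n:ℤ) (t : UnitAddCircle) + (-1 : ℂ) ^ m * fourier (-n) (t : UnitAddCircle)‖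
        ≤ ((1:ℝ) / (n:ℝ) ^ m) * 2 := by
          rw [h1]
          exact mul_le_mul_of_nonneg_left h2 (by positivity)
      _ = 2 * ((1:ℝ) / (n:ℝ) ^ m) := by ring
  have hsum0 : Summable (fun n : ℕ => (1:ℝ) / (n:ℝ) ^ m) := by
    rw [Real.summable_one_div_nat_pow]; omega
  have hsum1 : Summable (fun n : ℕ => 2 * ((1:ℝ) / (n:ℝ) ^ m)) := hsum0.mul_left 2
  have hsumf : Summable (fun n : ℕ => ‖f n‖) :=
    Summable.of_nonneg_of_le (fun n => norm_nonneg _) hb hsum1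
  have hnorm : ‖-(2 * (π:ℂ) * I) ^ m / m ! * (bernoulliFun m t : ℂ)‖
      ≤ 2 * ∑' n : ℕ, (1:ℝ) / (n:ℝ) ^ m := by
    rw [← h.tsum_eq]
    calc ‖∑' n, f n‖ ≤ ∑' n, ‖f n‖ := norm_tsum_le_tsum_norm hsumf
      _ ≤ ∑' n : ℕ, 2 * ((1:ℝ) / (n:ℝ) ^ m) := Summable.tsum_le_tsum hb hsumf hsum1
      _ = 2 * ∑' n : ℕ, (1:ℝ) / (n:ℝ) ^ m := tsum_mul_left
  have hshift : ∑' n : ℕ, (1:ℝ) / (n:ℝ) ^ m = ∑' n : ℕ, (1:ℝ) / ((n:ℝ)+1) ^ m := by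
    rw [Summable.tsum_eq_zero_add hsum0]
    have : (1:ℝ) / ((0:ℕ):ℝ) ^ m = 0 := by
      simp [zero_pow (by omega : m ≠ 0)]
    rw [this, zero_add]
    push_cast
    rfl
  have hS : ‖-(2 * (π:ℂ) * I) ^ m / m ! * (bernoulliFun m t : ℂ)‖
      = (2 * π) ^ m / (m ! : ℝ) * |bernoulliFun m t| := by
    rw [norm_mul, norm_div, norm_neg, norm_pow, norm_mul, norm_mul, Complex.norm_I,
      Complex.norm_real, Complex.norm_natCast, Complex.norm_real]
    simp [Real.norm_eq_abs, abs_of_pos Real.pi_pos]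
  rw [hS, hshift] at hnorm
  have hpos : (0:ℝ) < (2 * π) ^ m := by positivity
  have hfac : (0:ℝ) < (m ! : ℝ) := by positivity
  rw [div_mul_eq_mul_div, div_le_iff₀ hfac] at hnorm
  have heq : |bernoulliFun m t| = ((2 * π) ^ m * |bernoulliFun m t|) / (2 * π) ^ m := by
    field_simp
  rw [heq]
  calc ((2 * π) ^ m * |bernoulliFun m t|) / (2 * π) ^ m
      ≤ (2 * (∑' n : ℕ, (1:ℝ) / ((n:ℝ)+1) ^ m) * (m ! : ℝ)) / (2 * π) ^ m :=
        (div_le_div_iff_of_pos_right hpos).mpr hnorm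
    _ = 2 * (m ! : ℝ) / (2 * π) ^ m * ∑' n : ℕ, (1:ℝ) / ((n:ℝ)+1) ^ m := by ring

/-- Let `F 0 = X` and, inductively, `F (k+1)` be the unique polynomial
with derivative `F k` and mean zero on `[-1,1]`.  For every `k ≥ 1` and every `x ∈ [-1,1]`,
`|F k (x)| ≤ 2 π^{-(k+1)} ∑_{n=1}^∞ 1/n^{k+1}`. -/
theorem stmt9 (F : ℕ → Polynomial ℝ)
    (hF0 : F 0 = Polynomial.X)
    (hFd : ∀ k : ℕ, Polynomial.derivative (F (k + 1)) = F k)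
    (hFi : ∀ k : ℕ, ∫ x in (-1 : ℝ)..1, (F (k + 1)).eval x = 0)
    (k : ℕ) (hk1 : 1 ≤ k) (x : ℝ) (hx : x ∈ Set.Icc (-1 : ℝ) 1) :
    |(F k).eval x| ≤ 2 * (Real.pi ^ (k + 1))⁻¹ * ∑' n : ℕ, (1 : ℝ) / (n + 1) ^ (k + 1) := by
  have ht : (x + 1) / 2 ∈ Set.Icc (0:ℝ) 1 := by
    obtain ⟨h1, h2⟩ := hx
    constructor <;> [linarith; linarith]
  have hB := bern_bound (by omega : 2 ≤ k + 1) ht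
  rw [F_eq F hF0 hFd hFi k x, abs_mul]
  have hc : |(2:ℝ) ^ (k+1) / ((k+1)! : ℝ)| = 2 ^ (k+1) / (k+1)! := by
    rw [abs_of_pos]; positivity
  rw [hc]
  have key : (2:ℝ) ^ (k+1) / (k+1)! * (2 * ((k+1)! : ℝ) / (2 * π) ^ (k+1))
      = 2 * (π ^ (k+1))⁻¹ := by
    have h1 : ((k+1)! : ℝ) ≠ 0 := by positivity
    have h2 : (2 * π) ^ (k+1) = 2 ^ (k+1) * π ^ (k+1) := by rw [mul_pow]
    field_simp [h2]
    ring
  calc (2:ℝ) ^ (k+1) / (k+1)! * |bernoulliFun (k+1) ((x+1)/2)|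
      ≤ 2 ^ (k+1) / (k+1)! * (2 * ((k+1)! : ℝ) / (2 * π) ^ (k+1) * ∑' n : ℕ, (1:ℝ) / ((n:ℝ)+1) ^ (k+1)) := by
        apply mul_le_mul_of_nonneg_left hB (by positivity)
    _ = 2 * (π ^ (k+1))⁻¹ * ∑' n : ℕ, (1:ℝ) / ((n:ℝ)+1) ^ (k+1) := by
        rw [← mul_assoc, key]
end
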